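/- (Lemma on coupled one-step monotonicity) Suppose x ≼_A y, and: (1) Ῠ_j(y) ≤ Υ_j(x) whenever y + v_j ∈ 𝒳 \ (K_A + x), and (2) Ῠ_j(y) ≥ Υ_j(x) whenever x + v_j ∈ 𝒳 and y ∉ K_A + x + v_j. Then for every u ∈ [0,1], Φ_λ(x,u) ≼_A Φ̆_λ(y,u). -/
import Mathlib


/-- One-step monotonicity of the coupled uniformization maps: if x ≼_A y and the
rate comparison conditions (1) and (2) hold for this pair, then
Φ_λ(x,u) ≼_A Φ̆_λ(y,u) for every u ∈ [0,1]. -/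
theorem Phi_lambda_one_step_monotone (m d n : ℕ) (hn : 1 ≤ n)
    (A : Matrix (Fin m) (Fin d) ℝ) (hA : ∀ i : Fin m, ∃ k : Fin d, A i k ≠ 0)
    (𝒳 : Set (Fin d → ℝ)) (h𝒳 : ∀ x ∈ 𝒳, ∀ i : Fin d, ∃ k : ℕ, x i = (k : ℝ))
    (v : Fin n → (Fin d → ℝ)) (hvint : ∀ j, ∀ i : Fin d, ∃ k : ℤ, v j i = (k : ℝ))
    (hvne : ∀ j, v j ≠ 0) (hvdist : Function.Injective v)
    (Υ Ῠ : Fin n → (Fin d → ℝ) → ℝ)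
    (hΥ : ∀ j x, 0 ≤ Υ j x) (hῩ : ∀ j x, 0 ≤ Ῠ j x)
    (hzero : ∀ j : Fin n, ∀ x ∈ 𝒳, x + v j ∉ 𝒳 → Υ j x = 0)
    (hzero' : ∀ j : Fin n, ∀ x ∈ 𝒳, x + v j ∉ 𝒳 → Ῠ j x = 0)
    (lam : ℝ) (hlam : ∀ x ∈ 𝒳, (n : ℝ) * (∑ j, Υ j x) < lam)
    (hlam' : ∀ x ∈ 𝒳, (n : ℝ) * (∑ j, Ῠ j x) < lam)
    (x y : Fin d → ℝ) (hx : x ∈ 𝒳) (hy : y ∈ 𝒳)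
    (hxy : ∀ i : Fin m, 0 ≤ A.mulVec (y - x) i)
    (cond1 : ∀ j : Fin n, y + v j ∈ 𝒳 →
      ¬ (∀ i : Fin m, 0 ≤ A.mulVec ((y + v j) - x) i) → Ῠ j y ≤ Υ j x)
    (cond2 : ∀ j : Fin n, x + v j ∈ 𝒳 →
      ¬ (∀ i : Fin m, 0 ≤ A.mulVec (y - (x + v j)) i) → Υ j x ≤ Ῠ j y) :
    ∀ u ∈ Set.Icc (0 : ℝ) 1, ∀ i : Fin m,
      0 ≤ A.mulVec
        ((y + ∑ k : Fin n,
            if u ∈ Set.Ico (((k : ℕ) : ℝ) / n) (((k : ℕ) : ℝ) / n + Ῠ k y / lam)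
            then v k else 0) -
         (x + ∑ k : Fin n,
            if u ∈ Set.Ico (((k : ℕ) : ℝ) / n) (((k : ℕ) : ℝ) / n + Υ k x / lam)
            then v k else 0)) i := by
  intro u hu i
  classical
  have hnpos : (0:ℝ) < n := by exact_mod_cast Nat.lt_of_lt_of_le Nat.zero_lt_one hn
  have hsumx : 0 ≤ ∑ j, Υ j x := Finset.sum_nonneg fun j _ => hΥ j x
  have hlampos : 0 < lam := lt_of_le_of_lt (mul_nonneg hnpos.le hsumx) (hlam x hx)
  have hb1 : ∀ k : Fin n, Υ k x / lam < 1 / (n:ℝ) := by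
    intro k
    rw [div_lt_div_iff₀ hlampos hnpos, one_mul, mul_comm]
    calc (n:ℝ) * Υ k x ≤ (n:ℝ) * ∑ j, Υ j x := by
          gcongr
          exact Finset.single_le_sum (fun j _ => hΥ j x) (Finset.mem_univ k)
      _ < lam := hlam x hx
  have hb2 : ∀ k : Fin n, Ῠ k y / lam < 1 / (n:ℝ) := by
    intro k
    rw [div_lt_div_iff₀ hlampos hnpos, one_mul, mul_comm]
    calc (n:ℝ) * Ῠ k y ≤ (n:ℝ) * ∑ j, Ῠ j y := by
          gcongr
          exact Finset.single_le_sum (fun j _ => hῩ j y) (Finset.mem_univ k)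
      _ < lam := hlam' y hy
  have hloc : ∀ (k : Fin n) (a : ℝ), a / lam < 1 / (n:ℝ) →
      u ∈ Set.Ico (((k:ℕ):ℝ)/n) (((k:ℕ):ℝ)/n + a / lam) →
      ((k:ℕ):ℝ)/n ≤ u ∧ u < (((k:ℕ):ℝ) + 1)/n := by
    intro k a ha hu'
    rcases hu' with ⟨h1, h2⟩
    refine ⟨h1, ?_⟩
    have : u < ((k:ℕ):ℝ)/n + 1/n := by linarith
    rw [add_div]
    linarith
  have huniqaux : ∀ (k k' : Fin n),
      (((k:ℕ):ℝ)/n ≤ u ∧ u < (((k:ℕ):ℝ) + 1)/n) →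
      (((k':ℕ):ℝ)/n ≤ u ∧ u < (((k':ℕ):ℝ) + 1)/n) → k = k' := by
    intro k k' ⟨ha1, ha2⟩ ⟨hb1', hb2'⟩
    have h1 : ((k:ℕ):ℝ)/n < (((k':ℕ):ℝ) + 1)/n := lt_of_le_of_lt ha1 hb2'
    have h2 : ((k':ℕ):ℝ)/n < (((k:ℕ):ℝ) + 1)/n := lt_of_le_of_lt hb1' ha2
    rw [div_lt_div_iff_of_pos_right hnpos] at h1 h2
    have h1' : (k:ℕ) < (k':ℕ) + 1 := by exact_mod_cast h1
    have h2' : (k':ℕ) < (k:ℕ) + 1 := by exact_mod_cast h2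
    exact Fin.ext (Nat.le_antisymm (Nat.lt_succ_iff.mp h1') (Nat.lt_succ_iff.mp h2'))
  by_cases hex : ∃ k : Fin n,
      (u ∈ Set.Ico (((k:ℕ):ℝ)/n) (((k:ℕ):ℝ)/n + Υ k x / lam) ∨
       u ∈ Set.Ico (((k:ℕ):ℝ)/n) (((k:ℕ):ℝ)/n + Ῠ k y / lam))
  · obtain ⟨k0, hk0⟩ := hex
    have hwin0 : ((k0:ℕ):ℝ)/n ≤ u ∧ u < (((k0:ℕ):ℝ) + 1)/n := by
      rcases hk0 with h | h
      · exact hloc k0 _ (hb1 k0) h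
      · exact hloc k0 _ (hb2 k0) h
    have huq : ∀ k : Fin n,
        (u ∈ Set.Ico (((k:ℕ):ℝ)/n) (((k:ℕ):ℝ)/n + Υ k x / lam) ∨
         u ∈ Set.Ico (((k:ℕ):ℝ)/n) (((k:ℕ):ℝ)/n + Ῠ k y / lam)) → k = k0 := by
      intro k hk
      apply huniqaux k k0 _ hwin0
      rcases hk with h | h
      · exact hloc k _ (hb1 k) h
      · exact hloc k _ (hb2 k) h
    have hS2 : (∑ k : Fin n,
        if u ∈ Set.Ico (((k:ℕ):ℝ)/n) (((k:ℕ):ℝ)/n + Υ k x / lam) then v k else 0)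
        = if u ∈ Set.Ico (((k0:ℕ):ℝ)/n) (((k0:ℕ):ℝ)/n + Υ k0 x / lam) then v k0 else 0 := by
      apply Finset.sum_eq_single
      · intro b _ hb
        exact if_neg fun hb' => hb (huq b (Or.inl hb'))
      · intro h; exact absurd (Finset.mem_univ k0) h
    have hS1 : (∑ k : Fin n,
        if u ∈ Set.Ico (((k:ℕ):ℝ)/n) (((k:ℕ):ℝ)/n + Ῠ k y / lam) then v k else 0)
        = if u ∈ Set.Ico (((k0:ℕ):ℝ)/n) (((k0:ℕ):ℝ)/n + Ῠ k0 y / lam) then v k0 else 0 := by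
      apply Finset.sum_eq_single
      · intro b _ hb
        exact if_neg fun hb' => hb (huq b (Or.inr hb'))
      · intro h; exact absurd (Finset.mem_univ k0) h
    rw [hS1, hS2]
    split_ifs with hQ hP hP
    · have : (y + v k0) - (x + v k0) = y - x := by abel
      rw [this]; exact hxy i
    · -- Q holds, P fails
      have hYpos : 0 < Ῠ k0 y := by
        rcases hQ with ⟨h1, h2⟩
        have : 0 < Ῠ k0 y / lam := by linarith
        exact (div_pos_iff_of_pos_right hlampos).mp this
      have hmem : y + v k0 ∈ 𝒳 := by
        by_contra h
        have := hzero' k0 y hy h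
        linarith
      rw [show (y + v k0) - (x + 0) = (y + v k0) - x by abel]
      by_contra hcon
      have hle : Ῠ k0 y ≤ Υ k0 x := cond1 k0 hmem fun hall => hcon (hall i)
      apply hP
      refine ⟨hQ.1, lt_of_lt_of_le hQ.2 ?_⟩
      have : Ῠ k0 y / lam ≤ Υ k0 x / lam := by gcongr
      linarith
    · -- P holds, Q fails
      have hYpos : 0 < Υ k0 x := by
        rcases hP with ⟨h1, h2⟩
        have : 0 < Υ k0 x / lam := by linarith
        exact (div_pos_iff_of_pos_right hlampos).mp this
      have hmem : x + v k0 ∈ 𝒳 := by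
        by_contra h
        have := hzero k0 x hx h
        linarith
      rw [show (y + 0) - (x + v k0) = y - (x + v k0) by abel]
      by_contra hcon
      have hle : Υ k0 x ≤ Ῠ k0 y := cond2 k0 hmem fun hall => hcon (hall i)
      apply hQ
      refine ⟨hP.1, lt_of_lt_of_le hP.2 ?_⟩
      have : Υ k0 x / lam ≤ Ῠ k0 y / lam := by gcongr
      linarith
    · exact absurd hk0 (by simp [hP, hQ])
  · push_neg at hex
    have hS2 : (∑ k : Fin n,
        if u ∈ Set.Ico (((k:ℕ):ℝ)/n) (((k:ℕ):ℝ)/n + Υ k x / lam) then v k else 0)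
        = 0 := Finset.sum_eq_zero fun k _ => if_neg fun h => (hex k).1 h
    have hS1 : (∑ k : Fin n,
        if u ∈ Set.Ico (((k:ℕ):ℝ)/n) (((k:ℕ):ℝ)/n + Ῠ k y / lam) then v k else 0)
        = 0 := Finset.sum_eq_zero fun k _ => if_neg ((hex k).2)
    rw [hS1, hS2, show (y + 0) - (x + 0) = y - x by abel]
    exact hxy i
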